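/- arXiv:0809.2057 — 3 statements merged into one kernel-verified Lean document; each statement's English description precedes it below -/
import Mathlib

section
/- Let M : ℕ → ℝ be a sequence of positive reals with M_0 = 1, M increasing, M logarithmically convex, and having moderate growth: sup_{j+k≥1} (M_{j+k}/(M_j·M_k))^{1/(j+k)} < ∞. Then for every real s ≥ 1 there exists a constant ρ(s) ≥ 1, depending only on s and M, such that h_M(t) ≤ (h_M(ρ(s)·t))^s for all t ≥ 0, where h_M(t) = inf_{j≥0} t^j·M_j for t > 0 and h_M(0) = 0. -/
open Set Filter Topology

noncomputable section

/-- The function `h_M` associated with the sequence `M`: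
`h_M(t) = inf_{j≥0} t^j·M_j` for `t ≠ 0`, and `h_M(0) = 0`. -/
def hFun (M : ℕ → ℝ) (t : ℝ) : ℝ := if t = 0 then 0 else ⨅ j : ℕ, t ^ j * M j

/-!
Moderate growth with `j = k` gives `M_{2j} ≤ A^{2j} M_j²`, so `t^{2j} M_{2j} ≤ ((A t)^j M_j)²`
and taking infima, `h_M(t) ≤ h_M(A t)²`. Iterating, `h_M(t) ≤ h_M(Aⁿ t)^{2ⁿ}`. Since
`0 ≤ h_M ≤ 1`, lowering the exponent `2ⁿ` to any `s ≤ 2ⁿ` only increases the right-hand side,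
so `ρ(s) = Aⁿ` with `s ≤ 2ⁿ` works.
-/

section hFun

variable {M : ℕ → ℝ}

@[simp]
lemma hFun_zero : hFun M 0 = 0 := if_pos rfl

lemma hFun_nonneg (hM : ∀ j, 0 ≤ M j) {t : ℝ} (ht : 0 ≤ t) : 0 ≤ hFun M t := by
  unfold hFun
  split_ifs
  · rfl
  · exact le_ciInf fun j => mul_nonneg (pow_nonneg ht j) (hM j)

lemma hFun_le_pow_mul (hM : ∀ j, 0 ≤ M j) {t : ℝ} (ht : 0 ≤ t) (j : ℕ) :
    hFun M t ≤ t ^ j * M j := by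
  unfold hFun
  split_ifs
  · exact mul_nonneg (pow_nonneg ht j) (hM j)
  · exact ciInf_le ⟨0, by rintro _ ⟨i, rfl⟩; exact mul_nonneg (pow_nonneg ht i) (hM i)⟩ j

lemma le_hFun {t c : ℝ} (ht : 0 < t) (hc : ∀ j, c ≤ t ^ j * M j) : c ≤ hFun M t := by
  rw [hFun, if_neg ht.ne']
  exact le_ciInf hc

lemma hFun_le_one (hM : ∀ j, 0 ≤ M j) (hM0 : M 0 = 1) {t : ℝ} (ht : 0 ≤ t) : hFun M t ≤ 1 := by
  simpa [hM0] using hFun_le_pow_mul hM ht 0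

lemma hFun_le_sq (hM : ∀ j, 0 ≤ M j) {A : ℝ} (hA : 0 < A)
    (hdouble : ∀ j, M (j + j) ≤ A ^ (j + j) * (M j * M j)) {t : ℝ} (ht : 0 ≤ t) :
    hFun M t ≤ hFun M (A * t) ^ 2 := by
  rcases ht.eq_or_lt with rfl | ht
  · simp
  have hsq : ∀ j, hFun M t ≤ ((A * t) ^ j * M j) ^ 2 := fun j =>
    calc hFun M t ≤ t ^ (j + j) * M (j + j) := hFun_le_pow_mul hM ht.le _
      _ ≤ t ^ (j + j) * (A ^ (j + j) * (M j * M j)) := by gcongr; exact hdouble j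
      _ = ((A * t) ^ j * M j) ^ 2 := by ring
  have hsqrt : √(hFun M t) ≤ hFun M (A * t) :=
    le_hFun (mul_pos hA ht) fun j =>
      Real.sqrt_le_iff.mpr ⟨mul_nonneg (pow_nonneg (mul_pos hA ht).le j) (hM j), hsq j⟩
  exact (Real.sqrt_le_iff.mp hsqrt).2

lemma hFun_le_pow_two_pow (hM : ∀ j, 0 ≤ M j) {A : ℝ} (hA : 0 < A)
    (hdouble : ∀ j, M (j + j) ≤ A ^ (j + j) * (M j * M j)) (n : ℕ) {t : ℝ} (ht : 0 ≤ t) :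
    hFun M t ≤ hFun M (A ^ n * t) ^ 2 ^ n := by
  induction n with
  | zero => simp
  | succ n ih =>
    have hAnt : 0 ≤ A ^ n * t := mul_nonneg (pow_nonneg hA.le n) ht
    calc hFun M t ≤ hFun M (A ^ n * t) ^ 2 ^ n := ih
      _ ≤ (hFun M (A * (A ^ n * t)) ^ 2) ^ 2 ^ n := by
        gcongr
        · exact hFun_nonneg hM hAnt
        · exact hFun_le_sq hM hA hdouble hAnt
      _ = hFun M (A ^ (n + 1) * t) ^ 2 ^ (n + 1) := by
        rw [← pow_mul, ← mul_assoc, ← pow_succ', ← pow_succ']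

end hFun

lemma le_pow_mul_mul_of_rpow_le {M : ℕ → ℝ} (hpos : ∀ j, 0 < M j) {A : ℝ} (hA : 0 ≤ A)
    {j k : ℕ} (hjk : 1 ≤ j + k)
    (h : (M (j + k) / (M j * M k)) ^ ((1 : ℝ) / ((j : ℝ) + (k : ℝ))) ≤ A) :
    M (j + k) ≤ A ^ (j + k) * (M j * M k) := by
  have hjk' : (0 : ℝ) < (j : ℝ) + (k : ℝ) := by exact_mod_cast hjk
  have hMjk : 0 < M j * M k := mul_pos (hpos j) (hpos k)
  rwa [one_div, Real.rpow_inv_le_iff_of_pos (div_pos (hpos _) hMjk).le hA hjk', ← Nat.cast_add,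
    Real.rpow_natCast, div_le_iff₀ hMjk] at h

theorem hFun_power_bound_of_moderate_growth_general
    (M : ℕ → ℝ) (hpos : ∀ j, 0 < M j) (hM0 : M 0 = 1)
    (hmg : ∃ A : ℝ, ∀ j k : ℕ, 1 ≤ j + k →
      (M (j+k) / (M j * M k)) ^ ((1:ℝ)/((j:ℝ)+(k:ℝ))) ≤ A) :
    ∀ s : ℝ, 1 ≤ s → ∃ ρ ≥ (1:ℝ), ∀ t : ℝ, 0 ≤ t →
      hFun M t ≤ (hFun M (ρ * t)) ^ s := by
  obtain ⟨A₀, hA₀⟩ := hmg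
  set A := max A₀ 1
  have hA : 1 ≤ A := le_max_right _ _
  have hM : ∀ j, 0 ≤ M j := fun j => (hpos j).le
  have hdouble : ∀ j, M (j + j) ≤ A ^ (j + j) * (M j * M j) := by
    rintro (_ | j)
    · simp [hM0]
    · exact le_pow_mul_mul_of_rpow_le hpos (zero_le_one.trans hA) (by omega)
        ((hA₀ _ _ (by omega)).trans (le_max_left _ _))
  intro s hs
  set n := ⌈s⌉₊
  have hs2 : s ≤ ((2 ^ n : ℕ) : ℝ) :=
    (Nat.le_ceil s).trans (by exact_mod_cast Nat.lt_two_pow_self.le)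
  refine ⟨A ^ n, one_le_pow₀ hA, fun t ht => ?_⟩
  have hAnt : 0 ≤ A ^ n * t := by positivity
  calc hFun M t ≤ hFun M (A ^ n * t) ^ 2 ^ n :=
        hFun_le_pow_two_pow hM (by positivity) hdouble n ht
    _ = hFun M (A ^ n * t) ^ ((2 ^ n : ℕ) : ℝ) := (Real.rpow_natCast _ _).symm
    _ ≤ hFun M (A ^ n * t) ^ s :=
        Real.rpow_le_rpow_of_exponent_ge' (hFun_nonneg hM hAnt) (hFun_le_one hM hM0 hAnt)
          (by linarith) hs2

/-- Under the moderate growth condition, `h_M(t) ≤ (h_M(ρ(s)·t))^s` for `s ≥ 1`. -/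
theorem hFun_power_bound_of_moderate_growth
    (M : ℕ → ℝ) (hpos : ∀ j, 0 < M j) (hM0 : M 0 = 1) (hmono : Monotone M)
    (hlc : ∀ j : ℕ, (M (j+1))^2 ≤ M j * M (j+2))
    (hmg : ∃ A : ℝ, ∀ j k : ℕ, 1 ≤ j + k →
      (M (j+k) / (M j * M k)) ^ ((1:ℝ)/((j:ℝ)+(k:ℝ))) ≤ A) :
    ∀ s : ℝ, 1 ≤ s → ∃ ρ ≥ (1:ℝ), ∀ t : ℝ, 0 ≤ t →
      hFun M t ≤ (hFun M (ρ * t)) ^ s :=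
  hFun_power_bound_of_moderate_growth_general M hpos hM0 hmg

end
end

section
/- Let 0 < γ < 2, 0 < r ≤ ∞, and let M : ℕ → ℝ be a sequence of positive reals with M_0 = 1, M increasing and logarithmically convex. If f ∈ A_M(S_{γ,r}) is flat (f^{(j)}(z) → 0 as z → 0 in S_{γ,r} for every j ∈ ℕ), then there exist positive constants c_1 and c_2 such that |f(z)| ≤ c_1·h_M(c_2·|z|) for all z ∈ S_{γ,r}. -/
open Set Filter Topology Complex ENNReal

noncomputable section

/-- The sector `S_{γ,r}` of the complex plane: `0 < |z| < r`, `|arg z| < γπ/2`. -/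
def Sector (γ : ℝ) (r : ℝ≥0∞) : Set ℂ :=
  {z : ℂ | z ≠ 0 ∧ |Complex.arg z| < γ * Real.pi / 2 ∧ (‖z‖₊ : ℝ≥0∞) < r}

/-- `f ∈ A^∞(S_{γ,r})`: `f` is holomorphic on the sector and all its derivatives
are bounded there. -/
def AInfty (γ : ℝ) (r : ℝ≥0∞) (f : ℂ → ℂ) : Prop :=
  DifferentiableOn ℂ f (Sector γ r) ∧
  ∀ j : ℕ, ∃ B : ℝ, ∀ z ∈ Sector γ r, ‖iteratedDeriv j f z‖ ≤ B

/-- `f ∈ A_M(S_{γ,r})`: `f ∈ A^∞(S_{γ,r})` with Denjoy–Carleman bounds. -/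
def AClass (M : ℕ → ℝ) (γ : ℝ) (r : ℝ≥0∞) (f : ℂ → ℂ) : Prop :=
  AInfty γ r f ∧
  ∃ C > (0:ℝ), ∃ σ > (0:ℝ), ∀ (j : ℕ), ∀ z ∈ Sector γ r,
    ‖iteratedDeriv j f z‖ ≤ C * σ ^ j * (Nat.factorial j : ℝ) * M j

/-- `f` is flat on `S_{γ,r}`: every derivative tends to `0` at the vertex. -/
def FlatOn (γ : ℝ) (r : ℝ≥0∞) (f : ℂ → ℂ) : Prop :=
  ∀ j : ℕ, Tendsto (iteratedDeriv j f) (𝓝[Sector γ r] 0) (𝓝 0)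

/-!
Since `f` is flat, each derivative `f^{(k)}` vanishes at the vertex, and the sector is
star-shaped with respect to it. Integrating along the segment `[0, z]` therefore turns a bound
`B` on `f^{(j)}` into `‖f(z)‖ ≤ B ‖z‖^j / j!`. With `B = C σ^j j! M_j` this gives
`‖f(z)‖ ≤ C (σ‖z‖)^j M_j` for every `j`, and taking the infimum over `j` gives `C · h_M(σ‖z‖)`.
-/

open scoped Nat

lemma isOpen_sector (γ : ℝ) (r : ℝ≥0∞) : IsOpen (Sector γ r) := by
  rw [isOpen_iff_mem_nhds]
  rintro z ⟨hz0, harg, hnorm⟩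
  have harg_nhds : ∀ᶠ w in 𝓝 z, |arg w| < γ * Real.pi / 2 := by
    by_cases hγ : Real.pi < γ * Real.pi / 2
    · exact Eventually.of_forall fun w => (abs_arg_le_pi w).trans_lt hγ
    · have hslit : z ∈ slitPlane := by
        refine mem_slitPlane_iff_arg.2 ⟨fun h => ?_, hz0⟩
        rw [h, abs_of_pos Real.pi_pos] at harg
        linarith
      exact (continuousAt_arg hslit).abs.eventually_lt_const harg
  have hnorm_nhds : ∀ᶠ w in 𝓝 z, (‖w‖₊ : ℝ≥0∞) < r :=
    (ENNReal.continuous_coe.comp continuous_nnnorm).continuousAt.eventually_lt_const hnorm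
  filter_upwards [isOpen_ne.mem_nhds hz0, harg_nhds, hnorm_nhds] with w hw0 hwarg hwnorm
  exact ⟨hw0, hwarg, hwnorm⟩

lemma ofReal_mul_mem_sector {γ : ℝ} {r : ℝ≥0∞} :
    ∀ z ∈ Sector γ r, ∀ t ∈ Ioc (0 : ℝ) 1, (t : ℂ) * z ∈ Sector γ r := by
  rintro z ⟨hz0, harg, hnorm⟩ t ⟨ht0, ht1⟩
  refine ⟨mul_ne_zero (ofReal_ne_zero.2 ht0.ne') hz0, by rwa [arg_real_mul z ht0], ?_⟩
  refine lt_of_le_of_lt (ENNReal.coe_le_coe.2 ?_) hnorm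
  change ‖(t : ℂ) * z‖ ≤ ‖z‖
  rw [norm_mul, norm_real, Real.norm_of_nonneg ht0.le]
  exact mul_le_of_le_one_left (norm_nonneg z) ht1

section RealSegment

variable {E : Type*} [NormedAddCommGroup E] [NormedSpace ℝ E]

lemma norm_le_of_tendsto_zero_of_norm_deriv_le_pow {u u' : ℝ → E} {K : ℝ} {m : ℕ}
    (hu : ∀ t ∈ Ioc (0 : ℝ) 1, HasDerivAt u (u' t) t)
    (hu' : ∀ t ∈ Ioc (0 : ℝ) 1, ‖u' t‖ ≤ K * t ^ m)
    (hlim : Tendsto u (𝓝[>] 0) (𝓝 0)) :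
    ‖u 1‖ ≤ K / (m + 1) := by
  have hK : 0 ≤ K := by simpa using (norm_nonneg _).trans (hu' 1 (right_mem_Ioc.2 one_pos))
  have hstep : ∀ ε ∈ Ioo (0 : ℝ) 1, ‖u 1‖ ≤ K / (m + 1) + ‖u ε‖ := by
    rintro ε ⟨hε0, hε1⟩
    have hB : ∀ x, HasDerivAt (fun t => K / (m + 1) * t ^ (m + 1) + ‖u ε‖) (K * x ^ m) x := by
      intro x
      refine (((hasDerivAt_pow (m + 1) x).const_mul (K / (m + 1))).add_const ‖u ε‖).congr_deriv ?_
      rw [Nat.add_sub_cancel]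
      push_cast
      field_simp
    have hε : ‖u ε‖ ≤ K / (m + 1) * ε ^ (m + 1) + ‖u ε‖ :=
      le_add_of_nonneg_left (by positivity)
    simpa using image_norm_le_of_norm_deriv_right_le_deriv_boundary
      (fun t ht => (hu t ⟨hε0.trans_le ht.1, ht.2⟩).continuousAt.continuousWithinAt)
      (fun t ht => (hu t ⟨hε0.trans_le ht.1, ht.2.le⟩).hasDerivWithinAt) hε hB
      (fun t ht => hu' t ⟨hε0.trans_le ht.1, ht.2.le⟩) (right_mem_Icc.2 hε1.le)
  have hlim' : Tendsto (fun ε => K / (m + 1) + ‖u ε‖) (𝓝[>] 0) (𝓝 (K / (m + 1))) := by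
    simpa using tendsto_const_nhds.add hlim.norm
  exact ge_of_tendsto hlim' (eventually_of_mem (Ioo_mem_nhdsGT one_pos) hstep)

end RealSegment

variable {E : Type*} [NormedAddCommGroup E] [NormedSpace ℂ E] {S : Set ℂ}

lemma norm_le_of_tendsto_zero_of_norm_deriv_le_norm_pow
    (hS : ∀ z ∈ S, ∀ t ∈ Ioc (0 : ℝ) 1, (t : ℂ) * z ∈ S) {g g' : ℂ → E} {D : ℝ} {m : ℕ}
    (hg : ∀ w ∈ S, HasDerivAt g (g' w) w) (hg' : ∀ w ∈ S, ‖g' w‖ ≤ D * ‖w‖ ^ m)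
    (hlim : Tendsto g (𝓝[S] 0) (𝓝 0)) {z : ℂ} (hz : z ∈ S) :
    ‖g z‖ ≤ D * ‖z‖ ^ (m + 1) / (m + 1) := by
  have hray : Tendsto (fun t : ℝ => (t : ℂ) * z) (𝓝[>] 0) (𝓝[S] 0) := by
    refine tendsto_nhdsWithin_iff.2 ⟨?_, ?_⟩
    · simpa using ((Complex.continuous_ofReal.tendsto 0).mul_const z).mono_left nhdsWithin_le_nhds
    · filter_upwards [Ioo_mem_nhdsGT one_pos] with t ht
      exact hS z hz t (Ioo_subset_Ioc_self ht)
  have hu : ∀ t ∈ Ioc (0 : ℝ) 1,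
      HasDerivAt (fun s : ℝ => g ((s : ℂ) * z)) (z • g' ((t : ℂ) * z)) t := fun t ht =>
    (hg _ (hS z hz t ht)).scomp t (hasDerivAt_mul_const z).comp_ofReal
  have hu' : ∀ t ∈ Ioc (0 : ℝ) 1, ‖z • g' ((t : ℂ) * z)‖ ≤ D * ‖z‖ ^ (m + 1) * t ^ m := by
    intro t ht
    calc ‖z • g' ((t : ℂ) * z)‖ ≤ ‖z‖ * (D * ‖(t : ℂ) * z‖ ^ m) := by
          rw [norm_smul]
          exact mul_le_mul_of_nonneg_left (hg' _ (hS z hz t ht)) (norm_nonneg z)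
      _ = D * ‖z‖ ^ (m + 1) * t ^ m := by
          rw [norm_mul, norm_real, Real.norm_of_nonneg ht.1.le]
          ring
  simpa [mul_div_assoc] using norm_le_of_tendsto_zero_of_norm_deriv_le_pow hu hu' (hlim.comp hray)

lemma hasDerivAt_iteratedDeriv_of_differentiableOn [CompleteSpace E] (hSo : IsOpen S)
    {f : ℂ → E} (hf : DifferentiableOn ℂ f S) (k : ℕ) {w : ℂ} (hw : w ∈ S) :
    HasDerivAt (iteratedDeriv k f) (iteratedDeriv (k + 1) f w) w := by
  have hk : AnalyticAt ℂ (iteratedDeriv k f) w := by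
    rw [iteratedDeriv_eq_iterate]
    exact (hf.analyticOnNhd hSo).iterated_deriv k w hw
  rw [iteratedDeriv_succ]
  exact hk.differentiableAt.hasDerivAt

lemma norm_iteratedDeriv_le_of_tendsto_zero [CompleteSpace E] (hSo : IsOpen S)
    (hS : ∀ z ∈ S, ∀ t ∈ Ioc (0 : ℝ) 1, (t : ℂ) * z ∈ S) {f : ℂ → E}
    (hf : DifferentiableOn ℂ f S) (hflat : ∀ j, Tendsto (iteratedDeriv j f) (𝓝[S] 0) (𝓝 0))
    {B : ℝ} (m : ℕ) :
    ∀ k, (∀ w ∈ S, ‖iteratedDeriv (k + m) f w‖ ≤ B) →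
      ∀ z ∈ S, ‖iteratedDeriv k f z‖ ≤ B * ‖z‖ ^ m / m ! := by
  induction m with
  | zero => simp
  | succ m ih =>
    intro k hB z hz
    have hk : ∀ w ∈ S, ‖iteratedDeriv (k + 1) f w‖ ≤ B / m ! * ‖w‖ ^ m := fun w hw => by
      rw [div_mul_eq_mul_div]
      exact ih (k + 1) (by rwa [add_right_comm, add_assoc]) w hw
    calc ‖iteratedDeriv k f z‖ ≤ B / m ! * ‖z‖ ^ (m + 1) / (m + 1) :=
          norm_le_of_tendsto_zero_of_norm_deriv_le_norm_pow hS
            (fun w hw => hasDerivAt_iteratedDeriv_of_differentiableOn hSo hf k hw) hk (hflat k) hz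
      _ = B * ‖z‖ ^ (m + 1) / (m + 1) ! := by
          rw [Nat.factorial_succ]
          push_cast
          field_simp

lemma le_mul_hFun {M : ℕ → ℝ} {a c t : ℝ} (hc : 0 ≤ c) (ht : t ≠ 0)
    (h : ∀ j, a ≤ c * (t ^ j * M j)) : a ≤ c * hFun M t := by
  rw [hFun, if_neg ht, Real.mul_iInf_of_nonneg hc]
  exact le_ciInf h

theorem flat_bound_of_AClass_general
    (γ : ℝ) (r : ℝ≥0∞)
    (M : ℕ → ℝ)
    (f : ℂ → ℂ) (hf : AClass M γ r f) (hflat : FlatOn γ r f) :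
    ∃ c₁ > (0:ℝ), ∃ c₂ > (0:ℝ), ∀ z ∈ Sector γ r,
      ‖f z‖ ≤ c₁ * hFun M (c₂ * ‖z‖) := by
  obtain ⟨⟨hd, -⟩, C, hC, σ, hσ, hbound⟩ := hf
  refine ⟨C, hC, σ, hσ, fun z hz => le_mul_hFun hC.le ?_ fun j => ?_⟩
  · exact mul_ne_zero hσ.ne' (norm_ne_zero_iff.2 hz.1)
  have hfz := norm_iteratedDeriv_le_of_tendsto_zero (isOpen_sector γ r) ofReal_mul_mem_sector
    hd hflat j 0 (by simpa using hbound j) z hz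
  calc ‖f z‖ ≤ C * σ ^ j * j ! * M j * ‖z‖ ^ j / j ! := by simpa using hfz
    _ = C * ((σ * ‖z‖) ^ j * M j) := by
        field_simp
        ring

/-- A flat function of `A_M(S_{γ,r})` satisfies `|f(z)| ≤ c₁·h_M(c₂·|z|)`. -/
theorem flat_bound_of_AClass
    (γ : ℝ) (hγ0 : 0 < γ) (hγ2 : γ < 2) (r : ℝ≥0∞) (hr : 0 < r)
    (M : ℕ → ℝ) (hpos : ∀ j, 0 < M j) (hM0 : M 0 = 1) (hmono : Monotone M)
    (hlc : ∀ j : ℕ, (M (j+1))^2 ≤ M j * M (j+2))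
    (f : ℂ → ℂ) (hf : AClass M γ r f) (hflat : FlatOn γ r f) :
    ∃ c₁ > (0:ℝ), ∃ c₂ > (0:ℝ), ∀ z ∈ Sector γ r,
      ‖f z‖ ≤ c₁ * hFun M (c₂ * ‖z‖) :=
  flat_bound_of_AClass_general γ r M f hf hflat
end
end

section
/- For real numbers α ≥ 0 and β ≥ 0, let M_j = (j!)^α·(ln(j+e))^{β·j}. Then M satisfies the strong non-quasianalyticity condition sup_{k∈ℕ} (M_{k+1}/M_k)·∑_{j≥k} M_j/((j+1)·M_{j+1}) < ∞ if and only if α > 0. In particular, the Gevrey sequences M_j = (j!)^α with α > 0 are strongly non-quasianalytic. -/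
/-!
The ratio `ρ_m = M_{m+1}/M_m` equals `w_m = (m+1)^α (ln(m+1+e))^β` up to a factor in `[1, e^β]`,
so `ρ_k ∑_{j≥k} M_j/((j+1)M_{j+1})` is comparable to `∑_{j≥k} (w_k/w_j)/(j+1)`.
For `α > 0` we have `w_k/w_j ≤ ((k+1)/(j+1))^α`, and `∑_{j≥k} (j+1)^{-1-α} ≤ (1+1/α)(k+1)^{-α}`
by telescoping against `x^{-α}`. For `α = 0`, `w_k/w_j ≥ 2^{-β}` as long as `j+1 ≤ (k+1)^2`,
and the harmonic sum over `k < j+1 ≤ (k+1)^2` is at least `ln(k+1)`, which is unbounded.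
-/

open Set Filter Topology

noncomputable section

/-- The sequence `M_j = (j!)^α·(ln(j+e))^{βj}`. -/
def Mab (α β : ℝ) : ℕ → ℝ := fun j =>
  (Nat.factorial j : ℝ) ^ α * Real.log ((j:ℝ) + Real.exp 1) ^ (β * (j:ℝ))

open Real

lemma sum_range_le_of_le_sub_succ {f g : ℕ → ℝ} (hg : ∀ n, 0 ≤ g n)
    (h : ∀ n, f n ≤ g n - g (n + 1)) (n : ℕ) : ∑ i ∈ Finset.range n, f i ≤ g 0 :=
  calc ∑ i ∈ Finset.range n, f i ≤ ∑ i ∈ Finset.range n, (g i - g (i + 1)) :=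
        Finset.sum_le_sum fun i _ => h i
    _ = g 0 - g n := Finset.sum_range_sub' g n
    _ ≤ g 0 := sub_le_self _ (hg n)

lemma mul_rpow_neg_le_rpow_neg_sub {α x : ℝ} (hα : 0 ≤ α) (hx : 0 < x) :
    α * (x + 1) ^ (-(1 + α)) ≤ x ^ (-α) - (x + 1) ^ (-α) := by
  have hx1 : 0 < x + 1 := by linarith
  have hbernoulli : 1 + α * (x + 1)⁻¹ ≤ ((x + 1) / x) ^ α := by
    have hlog : (x + 1)⁻¹ ≤ log ((x + 1) / x) := by
      have := one_sub_inv_le_log_of_pos (div_pos hx1 hx)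
      rwa [inv_div, one_sub_div hx1.ne', add_sub_cancel_left, one_div] at this
    rw [rpow_def_of_pos (div_pos hx1 hx)]
    nlinarith [add_one_le_exp (log ((x + 1) / x) * α)]
  have hsplit : x ^ (-α) = (x + 1) ^ (-α) * ((x + 1) / x) ^ α := by
    rw [div_rpow hx1.le hx.le, rpow_neg hx.le, rpow_neg hx1.le]
    field_simp
  have hpow : (x + 1) ^ (-(1 + α)) = (x + 1) ^ (-α) * (x + 1)⁻¹ := by
    rw [neg_add, rpow_add hx1, rpow_neg_one, mul_comm]
  rw [hsplit, hpow]
  nlinarith [rpow_pos_of_pos hx1 (-α)]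

lemma summable_and_tsum_le_rpow_neg {α x : ℝ} (hα : 0 < α) (hx : 0 < x) :
    Summable (fun j : ℕ => ((j : ℝ) + x) ^ (-(1 + α))) ∧
      ∑' j : ℕ, ((j : ℝ) + x) ^ (-(1 + α)) ≤ x ^ (-(1 + α)) + x ^ (-α) / α := by
  set f : ℕ → ℝ := fun j => ((j : ℝ) + x) ^ (-(1 + α))
  set g : ℕ → ℝ := fun j => ((j : ℝ) + x) ^ (-α) / α
  have hf : ∀ j, 0 ≤ f j := fun j => by positivity
  have hg : ∀ j, 0 ≤ g j := fun j => by positivity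
  have htele : ∀ j, f (j + 1) ≤ g j - g (j + 1) := fun j => by
    simp only [f, g, ← sub_div, le_div_iff₀ hα, Nat.cast_succ, add_right_comm _ (1 : ℝ) x]
    rw [mul_comm]
    exact mul_rpow_neg_le_rpow_neg_sub hα.le (by positivity)
  have hshift : Summable (fun j => f (j + 1)) :=
    summable_of_sum_range_le (fun j => hf _) (sum_range_le_of_le_sub_succ hg htele)
  have hsum : Summable f := (summable_nat_add_iff 1).1 hshift
  refine ⟨hsum, ?_⟩
  rw [hsum.tsum_eq_zero_add]
  refine add_le_add (by simp [f]) ?_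
  simpa [g] using
    Real.tsum_le_of_sum_range_le (fun j => hf _) (sum_range_le_of_le_sub_succ hg htele)

lemma log_add_sub_log_le_sum_inv {x : ℝ} (hx : 0 < x) (n : ℕ) :
    log (x + n) - log x ≤ ∑ j ∈ Finset.range n, (x + j)⁻¹ := by
  have hstep : ∀ j : ℕ, log (x + (j + 1 : ℕ)) - log (x + j) ≤ (x + j)⁻¹ := fun j => by
    have hy : 0 < x + j := by positivity
    have := log_le_sub_one_of_pos (div_pos (by positivity : 0 < x + (j + 1 : ℕ)) hy)
    rw [log_div (by positivity) hy.ne'] at this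
    rw [Nat.cast_succ, ← add_assoc] at this ⊢
    rwa [add_div, div_self hy.ne', one_div, add_sub_cancel_left] at this
  calc log (x + n) - log x = ∑ j ∈ Finset.range n, (log (x + (j + 1 : ℕ)) - log (x + j)) := by
        rw [Finset.sum_range_sub (fun j : ℕ => log (x + j)) n]; simp
    _ ≤ _ := Finset.sum_le_sum fun j _ => hstep j

def logE (j : ℕ) : ℝ := log (j + exp 1)

lemma one_le_logE (j : ℕ) : 1 ≤ logE j :=
  (le_log_iff_exp_le (by positivity)).2 (le_add_of_nonneg_left j.cast_nonneg)

lemma logE_pos (j : ℕ) : 0 < logE j := one_pos.trans_le (one_le_logE j)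

lemma logE_mono : Monotone logE := fun i j hij =>
  log_le_log (by positivity) (by gcongr)

lemma logE_sq_le (n : ℕ) : logE (n ^ 2) ≤ 2 * logE n := by
  have he : 1 ≤ exp 1 := one_le_exp zero_le_one
  calc logE (n ^ 2) ≤ log ((n + exp 1) ^ 2) :=
        log_le_log (by positivity) (by push_cast; nlinarith [n.cast_nonneg (α := ℝ)])
    _ = 2 * logE n := by rw [log_pow, logE]; norm_num

lemma logE_succ_le (j : ℕ) : logE (j + 1) ≤ logE j * (1 + (j + exp 1)⁻¹) := by
  have hx : (0 : ℝ) < j + exp 1 := by positivity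
  have hsplit : ((j + 1 : ℕ) : ℝ) + exp 1 = (j + exp 1) * (1 + (j + exp 1)⁻¹) := by
    field_simp; push_cast; ring
  have hlog := log_le_sub_one_of_pos (show 0 < 1 + (j + exp 1)⁻¹ by positivity)
  have hinv : 0 ≤ (j + exp 1)⁻¹ := by positivity
  rw [logE, hsplit, log_mul hx.ne' (by positivity)]
  nlinarith [one_le_logE j, show log (j + exp 1) = logE j from rfl]

lemma logE_succ_rpow_le {β : ℝ} (hβ : 0 ≤ β) (j : ℕ) :
    logE (j + 1) ^ (β * j) ≤ exp β * logE j ^ (β * j) := by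
  have hx : (0 : ℝ) < j + exp 1 := by positivity
  have hβj : 0 ≤ β * j := by positivity
  have := logE_pos j
  calc logE (j + 1) ^ (β * j) ≤ (logE j * (1 + (j + exp 1)⁻¹)) ^ (β * j) :=
        rpow_le_rpow (logE_pos _).le (logE_succ_le j) hβj
    _ ≤ logE j ^ (β * j) * exp ((j + exp 1)⁻¹) ^ (β * j) := by
        rw [mul_rpow (logE_pos j).le (by positivity)]
        gcongr
        linarith [add_one_le_exp (j + exp 1)⁻¹]
    _ ≤ logE j ^ (β * j) * exp β := by
        rw [← exp_mul]
        gcongr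
        rw [inv_mul_le_iff₀ hx]
        nlinarith [exp_pos 1]
    _ = exp β * logE j ^ (β * j) := mul_comm _ _

lemma Mab_pos (α β : ℝ) (j : ℕ) : 0 < Mab α β j := by
  have := logE_pos j
  unfold Mab logE at *
  positivity

lemma Mab_succ_div_pos (α β : ℝ) (j : ℕ) : 0 < Mab α β (j + 1) / Mab α β j :=
  div_pos (Mab_pos α β _) (Mab_pos α β j)

lemma Mab_eq (α β : ℝ) (j : ℕ) : Mab α β j = (j.factorial : ℝ) ^ α * logE j ^ (β * j) := rfl

lemma Mab_succ (α β : ℝ) (j : ℕ) :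
    Mab α β (j + 1) =
      ((j : ℝ) + 1) ^ α * logE (j + 1) ^ β * ((j.factorial : ℝ) ^ α * logE (j + 1) ^ (β * j)) := by
  rw [Mab_eq, Nat.factorial_succ, Nat.cast_mul, mul_rpow (by positivity) (by positivity),
    Nat.cast_succ, mul_add_one, rpow_add (logE_pos _)]
  ring

def ratioWeight (α β : ℝ) (m : ℕ) : ℝ := ((m : ℝ) + 1) ^ α * logE (m + 1) ^ β

lemma ratioWeight_pos (α β : ℝ) (m : ℕ) : 0 < ratioWeight α β m := by
  have := logE_pos (m + 1)
  unfold ratioWeight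
  positivity

section RatioBounds

variable {β : ℝ} (α : ℝ) (hβ : 0 ≤ β) (m : ℕ)
include hβ

lemma ratioWeight_le_Mab_succ_div : ratioWeight α β m ≤ Mab α β (m + 1) / Mab α β m := by
  rw [le_div_iff₀ (Mab_pos α β m), Mab_succ, Mab_eq, ratioWeight]
  have := logE_pos m
  have := ratioWeight_pos α β m
  unfold ratioWeight at this
  gcongr
  exact logE_mono m.le_succ

lemma Mab_succ_div_le : Mab α β (m + 1) / Mab α β m ≤ exp β * ratioWeight α β m := by
  rw [div_le_iff₀ (Mab_pos α β m), Mab_succ, Mab_eq, ratioWeight]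
  have := logE_pos (m + 1)
  calc _ ≤ ((m : ℝ) + 1) ^ α * logE (m + 1) ^ β *
        ((m.factorial : ℝ) ^ α * (exp β * logE m ^ (β * m))) := by
        gcongr
        exact logE_succ_rpow_le hβ m
    _ = _ := by ring

end RatioBounds

-- the summand of the strong non-quasianalyticity condition
def snqTerm (M : ℕ → ℝ) (j : ℕ) : ℝ := M j / ((j + 1) * M (j + 1))

lemma snqTerm_eq_inv (M : ℕ → ℝ) (j : ℕ) :
    snqTerm M j = ((j + 1) * (M (j + 1) / M j))⁻¹ := by
  rw [snqTerm, mul_inv, inv_div, div_mul_eq_div_div_swap]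
  ring

lemma snqTerm_add (M : ℕ → ℝ) (j k : ℕ) :
    snqTerm M (j + k) = M (j + k) / (((j : ℝ) + (k : ℝ) + 1) * M (j + k + 1)) := by
  rw [snqTerm, Nat.cast_add]

lemma Mab_snqTerm_pos (α β : ℝ) (j : ℕ) : 0 < snqTerm (Mab α β) j := by
  have := Mab_pos α β j
  have := Mab_pos α β (j + 1)
  unfold snqTerm
  positivity

section ProductBounds

variable {β : ℝ} (α : ℝ) (hβ : 0 ≤ β) (k m : ℕ)
include hβ

lemma Mab_succ_div_mul_snqTerm_le :
    Mab α β (k + 1) / Mab α β k * snqTerm (Mab α β) m ≤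
      exp β * (ratioWeight α β k / ratioWeight α β m) / (m + 1) := by
  have := ratioWeight_pos α β k
  have := ratioWeight_pos α β m
  have := Mab_succ_div_pos α β m
  have := Mab_succ_div_le α hβ k
  have := ratioWeight_le_Mab_succ_div α hβ m
  calc _ ≤ exp β * ratioWeight α β k * ((m + 1) * ratioWeight α β m)⁻¹ := by
        rw [snqTerm_eq_inv]
        gcongr
    _ = _ := by rw [mul_inv]; ring

lemma le_Mab_succ_div_mul_snqTerm :
    exp (-β) * (ratioWeight α β k / ratioWeight α β m) / (m + 1) ≤
      Mab α β (k + 1) / Mab α β k * snqTerm (Mab α β) m := by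
  have := ratioWeight_pos α β m
  have := Mab_succ_div_pos α β k
  have := Mab_succ_div_pos α β m
  have := ratioWeight_le_Mab_succ_div α hβ k
  have := Mab_succ_div_le α hβ m
  calc _ = ratioWeight α β k * ((m + 1) * (exp β * ratioWeight α β m))⁻¹ := by
        rw [exp_neg, mul_inv, mul_inv]; ring
    _ ≤ _ := by
        rw [snqTerm_eq_inv]
        gcongr

end ProductBounds

lemma ratioWeight_div_le (α : ℝ) {β : ℝ} (hβ : 0 ≤ β) {k m : ℕ} (hkm : k ≤ m) :
    ratioWeight α β k / ratioWeight α β m ≤ ((k : ℝ) + 1) ^ α / ((m : ℝ) + 1) ^ α := by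
  have := logE_pos (k + 1)
  have := logE_pos (m + 1)
  rw [ratioWeight, ratioWeight, mul_div_mul_comm]
  refine mul_le_of_le_one_right (by positivity) (div_le_one_of_le₀ ?_ (by positivity))
  gcongr
  exact logE_mono (by omega)

lemma inv_two_rpow_le_ratioWeight_zero_div {β : ℝ} (hβ : 0 ≤ β) {k m : ℕ}
    (hm : m + 1 ≤ (k + 1) ^ 2) : ((2 : ℝ) ^ β)⁻¹ ≤ ratioWeight 0 β k / ratioWeight 0 β m := by
  have := logE_pos (m + 1)
  have hlog : logE (m + 1) ≤ 2 * logE (k + 1) :=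
    (logE_mono hm).trans (by exact_mod_cast logE_sq_le (k + 1))
  simp only [ratioWeight, rpow_zero, one_mul]
  rw [inv_le_iff_one_le_mul₀ (by positivity), div_mul_eq_mul_div, le_div_iff₀ (by positivity),
    one_mul, mul_comm, ← mul_rpow zero_le_two (logE_pos _).le]
  gcongr

lemma Mab_succ_div_mul_snqTerm_le_rpow (α : ℝ) {β : ℝ} (hβ : 0 ≤ β) (k j : ℕ) :
    Mab α β (k + 1) / Mab α β k * snqTerm (Mab α β) (j + k) ≤
      exp β * ((k : ℝ) + 1) ^ α * ((j : ℝ) + (k + 1)) ^ (-(1 + α)) := by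
  have hy : (0 : ℝ) < j + (k + 1) := by positivity
  have hcast : ((j + k : ℕ) : ℝ) + 1 = j + (k + 1) := by push_cast; ring
  calc _ ≤ exp β * (ratioWeight α β k / ratioWeight α β (j + k)) / ((j + k : ℕ) + 1) :=
        Mab_succ_div_mul_snqTerm_le α hβ k (j + k)
    _ ≤ exp β * (((k : ℝ) + 1) ^ α / (((j + k : ℕ) : ℝ) + 1) ^ α) / ((j + k : ℕ) + 1) := by
        gcongr exp β * ?_ / _
        exact ratioWeight_div_le α hβ (Nat.le_add_left k j)
    _ = _ := by
        rw [hcast, neg_add, rpow_add hy, rpow_neg_one, rpow_neg hy.le]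
        ring

lemma Mab_snq_bound_of_pos {α β : ℝ} (hα : 0 < α) (hβ : 0 ≤ β) :
    Summable (snqTerm (Mab α β)) ∧
      ∀ k : ℕ, Mab α β (k + 1) / Mab α β k * ∑' j : ℕ, snqTerm (Mab α β) (j + k) ≤
        exp β * (1 + 1 / α) := by
  have hk1 (k : ℕ) : (0 : ℝ) < k + 1 := by positivity
  have hdom (k : ℕ) :=
    ((summable_and_tsum_le_rpow_neg hα (hk1 k)).1.mul_left
      (exp β * ((k : ℝ) + 1) ^ α)).of_nonneg_of_le
      (fun j => (mul_pos (Mab_succ_div_pos α β k) (Mab_snqTerm_pos α β _)).le)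
      (Mab_succ_div_mul_snqTerm_le_rpow α hβ k)
  have hsum : Summable (snqTerm (Mab α β)) := by
    simpa using (summable_mul_left_iff (Mab_succ_div_pos α β 0).ne').1 (hdom 0)
  refine ⟨hsum, fun k => ?_⟩
  have hk : (1 : ℝ) ≤ k + 1 := by linarith [(k.cast_nonneg : (0 : ℝ) ≤ k)]
  rw [← tsum_mul_left]
  calc _ ≤ ∑' j : ℕ, exp β * ((k : ℝ) + 1) ^ α * ((j : ℝ) + (k + 1)) ^ (-(1 + α)) :=
        (hdom k).tsum_le_tsum (Mab_succ_div_mul_snqTerm_le_rpow α hβ k)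
          ((summable_and_tsum_le_rpow_neg hα (hk1 k)).1.mul_left _)
    _ ≤ exp β * ((k : ℝ) + 1) ^ α * (((k : ℝ) + 1) ^ (-α) + ((k : ℝ) + 1) ^ (-α) / α) := by
        rw [tsum_mul_left]
        gcongr
        refine (summable_and_tsum_le_rpow_neg hα (hk1 k)).2.trans ?_
        exact (add_le_add_iff_right _).2 (rpow_le_rpow_of_exponent_le hk (by linarith))
    _ = exp β * (1 + 1 / α) := by
        rw [rpow_neg (hk1 k).le]
        field_simp

lemma log_le_Mab_zero_snq {β : ℝ} (hβ : 0 ≤ β) (hs : Summable (snqTerm (Mab 0 β))) (k : ℕ) :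
    exp (-β) * ((2 : ℝ) ^ β)⁻¹ * log (k + 1) ≤
      Mab 0 β (k + 1) / Mab 0 β k * ∑' j : ℕ, snqTerm (Mab 0 β) (j + k) := by
  set c := exp (-β) * ((2 : ℝ) ^ β)⁻¹ with hc
  set ρ := Mab 0 β (k + 1) / Mab 0 β k
  -- on the window `j + k + 1 ≤ (k + 1)^2` we have `logE (j + k + 1) ≤ 2 * logE (k + 1)`
  set n := k * (k + 1) with hn
  have hx : (0 : ℝ) < k + 1 := by positivity
  have hterm :
      ∀ j ∈ Finset.range n, c * ((k + 1 : ℝ) + j)⁻¹ ≤ ρ * snqTerm (Mab 0 β) (j + k) := by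
    intro j hj
    have hm : j + k + 1 ≤ (k + 1) ^ 2 := by nlinarith [hn ▸ Finset.mem_range.1 hj]
    calc c * ((k + 1 : ℝ) + j)⁻¹
        ≤ exp (-β) * (ratioWeight 0 β k / ratioWeight 0 β (j + k)) / ((j + k : ℕ) + 1) := by
          rw [hc, show ((j + k : ℕ) : ℝ) + 1 = (k + 1) + j by push_cast; ring, div_eq_mul_inv]
          gcongr
          exact inv_two_rpow_le_ratioWeight_zero_div hβ hm
      _ ≤ _ := le_Mab_succ_div_mul_snqTerm 0 hβ k (j + k)
  calc c * log (k + 1) = c * (log ((k + 1) + n) - log (k + 1)) := by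
        have : ((k : ℝ) + 1) + n = (k + 1) ^ 2 := by rw [hn]; push_cast; ring
        rw [this, log_pow]
        ring
    _ ≤ c * ∑ j ∈ Finset.range n, ((k + 1 : ℝ) + j)⁻¹ := by
        gcongr
        exact log_add_sub_log_le_sum_inv hx n
    _ ≤ ∑ j ∈ Finset.range n, ρ * snqTerm (Mab 0 β) (j + k) := by
        rw [Finset.mul_sum]
        exact Finset.sum_le_sum hterm
    _ ≤ ∑' j : ℕ, ρ * snqTerm (Mab 0 β) (j + k) :=
        (((summable_nat_add_iff k).2 hs).mul_left ρ).sum_le_tsum _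
          fun j _ => (mul_pos (Mab_succ_div_pos 0 β k) (Mab_snqTerm_pos 0 β _)).le
    _ = ρ * ∑' j : ℕ, snqTerm (Mab 0 β) (j + k) := tsum_mul_left

lemma Mab_zero_not_snq {β : ℝ} (hβ : 0 ≤ β) (hs : Summable (snqTerm (Mab 0 β))) :
    ¬ ∃ A : ℝ, ∀ k : ℕ,
      Mab 0 β (k + 1) / Mab 0 β k * ∑' j : ℕ, snqTerm (Mab 0 β) (j + k) ≤ A := by
  rintro ⟨A, hA⟩
  have hlog : Tendsto (fun k : ℕ => exp (-β) * ((2 : ℝ) ^ β)⁻¹ * log (k + 1)) atTop atTop :=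
    (tendsto_log_atTop.comp
      (tendsto_atTop_add_const_right _ 1 tendsto_natCast_atTop_atTop)).const_mul_atTop
        (by positivity)
  obtain ⟨k, hk⟩ := (hlog.eventually_gt_atTop A).exists
  exact (hk.trans_le (log_le_Mab_zero_snq hβ hs k)).not_ge (hA k)

/-- The sequence `M_j = (j!)^α·(ln(j+e))^{βj}` is strongly non-quasianalytic
(the tail sums are finite and `sup_k (M_{k+1}/M_k)·∑_{j≥k} M_j/((j+1)M_{j+1}) < ∞`)
if and only if `α > 0`; in particular the Gevrey sequences `(j!)^α`, `α > 0`
(the case `β = 0`), are strongly non-quasianalytic. -/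
theorem Mab_strongly_nonquasianalytic_iff (α β : ℝ) (hα : 0 ≤ α) (hβ : 0 ≤ β) :
    (Summable (fun j : ℕ => Mab α β j / (((j:ℝ)+1) * Mab α β (j+1))) ∧
      ∃ A : ℝ, ∀ k : ℕ,
        Mab α β (k+1) / Mab α β k *
          ∑' j : ℕ, Mab α β (j+k) / (((j:ℝ)+(k:ℝ)+1) * Mab α β (j+k+1)) ≤ A)
    ↔ 0 < α := by
  simp_rw [← snqTerm_add]
  change Summable (snqTerm (Mab α β)) ∧ _ ↔ _
  constructor
  · rintro ⟨hs, hbdd⟩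
    by_contra hα0
    obtain rfl : α = 0 := le_antisymm (not_lt.1 hα0) hα
    exact Mab_zero_not_snq hβ hs hbdd
  · intro hα
    obtain ⟨hs, hbdd⟩ := Mab_snq_bound_of_pos hα hβ
    exact ⟨hs, _, hbdd⟩
end
end
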